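/- arXiv:1405.1059 — 3 statements merged into one kernel-verified Lean document; each statement's English description precedes it below -/
import Mathlib

section
/- Let K be a field of characteristic not 2 or 3 and E : y² = x³ + Ax + B a smooth elliptic curve over K. Define the third Semaev polynomial f_3(z_1,z_2,z_3) = (z_1 - z_2)²z_3² - 2((z_1+z_2)(z_1z_2 + A) + 2B)z_3 + (z_1z_2 - A)² - 4B(z_1+z_2). If P_1 = (Z_1, Y_1), P_2 = (Z_2, Y_2), P_3 = (Z_3, Y_3) are affine points on E over the algebraic closure with P_1 + P_2 + P_3 = O, then f_3(Z_1, Z_2, Z_3) = 0. -/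
/-!
The line through `P₁` and `P₂` (the tangent if they coincide) meets `E` in a third point, and
`P₁ + P₂ + P₃ = O` says this is `P₃`. If the line is `y = ℓx + ν`, then `Z₁, Z₂, Z₃` are the roots,
with multiplicity, of `x³ + Ax + B - (ℓx + ν)²`, so by Vieta their elementary symmetric functions are
`e₁ = ℓ²`, `e₂ = A - 2ℓν`, `e₃ = ν² - B`. Eliminating `ℓ` and `ν` gives `(e₂ - A)² = 4e₁(e₃ + B)`,
which is `f₃(Z₁, Z₂, Z₃) = 0` written in elementary symmetric functions.
-/

/-- The third Semaev (summation) polynomial of `E : y² = x³ + Ax + B`. -/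
def semaev3 {R : Type*} [CommRing R] (A B z₁ z₂ z₃ : R) : R :=
  (z₁ - z₂) ^ 2 * z₃ ^ 2 - 2 * ((z₁ + z₂) * (z₁ * z₂ + A) + 2 * B) * z₃ +
    (z₁ * z₂ - A) ^ 2 - 4 * B * (z₁ + z₂)

open Polynomial

namespace WeierstrassCurve.Affine

lemma semaev3_eq_zero_of_addPolynomial_eq {R : Type*} [CommRing R] {W : Affine R}
    (ha₁ : W.a₁ = 0) (ha₂ : W.a₂ = 0) (ha₃ : W.a₃ = 0) {x₁ x₂ x₃ y₁ ℓ : R}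
    (h : W.addPolynomial x₁ y₁ ℓ = -((X - C x₁) * (X - C x₂) * (X - C x₃))) :
    semaev3 W.a₄ W.a₆ x₁ x₂ x₃ = 0 := by
  rw [addPolynomial_eq, neg_inj, Cubic.prod_X_sub_C_eq, Cubic.toPoly_injective] at h
  obtain ⟨-, he₁, he₂, he₃⟩ := Cubic.ext_iff.mp h
  simp only [ha₁, ha₂, ha₃] at he₁ he₂ he₃
  unfold semaev3
  linear_combination (-(x₁ * x₂ + x₁ * x₃ + x₂ * x₃ - W.a₄ + 2 * x₁ * ℓ ^ 2 - 2 * y₁ * ℓ)) * he₂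
    - 4 * (x₁ * x₂ * x₃ + W.a₆) * he₁ - 4 * ℓ ^ 2 * he₃

variable {F : Type*} [Field F] [DecidableEq F] {W : Affine F} {x₁ x₂ x₃ y₁ y₂ y₃ : F}

lemma semaev3_addX_slope_eq_zero (ha₁ : W.a₁ = 0) (ha₂ : W.a₂ = 0) (ha₃ : W.a₃ = 0)
    (h₁ : W.Equation x₁ y₁) (h₂ : W.Equation x₂ y₂) (hxy : ¬(x₁ = x₂ ∧ y₁ = W.negY x₂ y₂)) :
    semaev3 W.a₄ W.a₆ x₁ x₂ (W.addX x₁ x₂ (W.slope x₁ x₂ y₁ y₂)) = 0 :=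
  semaev3_eq_zero_of_addPolynomial_eq ha₁ ha₂ ha₃ (addPolynomial_slope h₁ h₂ hxy)

namespace Point

lemma not_and_negY_of_some_add_some_add_some_eq_zero {h₁ : W.Nonsingular x₁ y₁}
    {h₂ : W.Nonsingular x₂ y₂} {h₃ : W.Nonsingular x₃ y₃}
    (h : some _ _ h₁ + some _ _ h₂ + some _ _ h₃ = 0) : ¬(x₁ = x₂ ∧ y₁ = W.negY x₂ y₂) := by
  rintro ⟨hx, hy⟩
  rw [add_of_Y_eq hx hy, zero_add] at h
  exact some_ne_zero h₃ h

lemma addX_slope_eq_of_some_add_some_add_some_eq_zero {h₁ : W.Nonsingular x₁ y₁}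
    {h₂ : W.Nonsingular x₂ y₂} {h₃ : W.Nonsingular x₃ y₃}
    (h : some _ _ h₁ + some _ _ h₂ + some _ _ h₃ = 0) :
    W.addX x₁ x₂ (W.slope x₁ x₂ y₁ y₂) = x₃ := by
  have hxy := not_and_negY_of_some_add_some_add_some_eq_zero h
  rw [add_some hxy, add_eq_zero_iff_eq_neg, neg_some] at h
  exact (some.inj h).1

end Point

end WeierstrassCurve.Affine

open Classical in
/-- If three affine points `(Z_i, Y_i)` of `E : y² = x³ + Ax + B` over the algebraic
closure sum to the point at infinity, then the third Semaev polynomial vanishes at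
`(Z₁, Z₂, Z₃)`. -/
theorem semaev3_vanishes_of_sum_eq_zero {F : Type*} [Field F]
    (h2 : ringChar F ≠ 2) (h3 : ringChar F ≠ 3) (A B : F)
    (W : WeierstrassCurve.Affine (AlgebraicClosure F))
    (hW : W = { a₁ := 0, a₂ := 0, a₃ := 0,
                a₄ := algebraMap F (AlgebraicClosure F) A,
                a₆ := algebraMap F (AlgebraicClosure F) B })
    (hΔ : W.Δ ≠ 0)
    (Z₁ Z₂ Z₃ Y₁ Y₂ Y₃ : AlgebraicClosure F)
    (h1 : W.Nonsingular Z₁ Y₁) (hp2 : W.Nonsingular Z₂ Y₂) (hp3 : W.Nonsingular Z₃ Y₃)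
    (hsum : WeierstrassCurve.Affine.Point.some _ _ h1 + WeierstrassCurve.Affine.Point.some _ _ hp2 +
      WeierstrassCurve.Affine.Point.some _ _ hp3 = 0) :
    semaev3 (algebraMap F (AlgebraicClosure F) A) (algebraMap F (AlgebraicClosure F) B)
      Z₁ Z₂ Z₃ = 0 := by
  open WeierstrassCurve.Affine in
  rw [← Point.addX_slope_eq_of_some_add_some_add_some_eq_zero hsum]
  subst hW
  exact semaev3_addX_slope_eq_zero rfl rfl rfl h1.1 hp2.1
    (Point.not_and_negY_of_some_add_some_add_some_eq_zero hsum)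
end

section
/- Let K be a field of characteristic not 2 or 3 and E : y² = x³ + Ax + B a smooth elliptic curve over K with algebraic closure K̄. If Z_1, Z_2, Z_3 ∈ K̄ satisfy f_3(Z_1, Z_2, Z_3) = 0 and each Z_i is the x-coordinate of some point of E(K̄), then there exist Y_1, Y_2, Y_3 ∈ K̄ with (Z_i, Y_i) ∈ E(K̄) and (Z_1,Y_1) + (Z_2,Y_2) + (Z_3,Y_3) = O. -/
/-!
Take points `P₁ = (Z₁, y₁)` and `P₂ = (Z₂, y₂)` on the curve. If `Z₁ ≠ Z₂`, then modulo the curve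
equations `(Z₁ - Z₂)² f₃(Z₁, Z₂, X) = (Z₁ - Z₂)⁴ (X - x(P₁ + P₂)) (X - x(P₁ - P₂))`; if `Z₁ = Z₂`,
then `f₃(Z₁, Z₁, X) = (3Z₁² + A)² - 4y₁² (X + 2Z₁)`, which by smoothness has no root when `y₁ = 0`
and otherwise vanishes exactly at `x(2P₁)`. Either way a root `Z₃` is the x-coordinate of
`P₁ ± P₂`, and `P₃ = -(P₁ ± P₂)` completes the sum to zero.
-/

namespace WeierstrassCurve.Affine

open Point

variable {K : Type*} [Field K] {W : Affine K}

lemma exists_add_add_eq_zero_of_addX_eq [DecidableEq K] {x₁ x₂ x₃ y₁ y₂ : K}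
    (h₁ : W.Nonsingular x₁ y₁) (h₂ : W.Nonsingular x₂ y₂) (hxy : ¬(x₁ = x₂ ∧ y₁ = W.negY x₂ y₂))
    (hx : W.addX x₁ x₂ (W.slope x₁ x₂ y₁ y₂) = x₃) :
    ∃ (y₃ : K) (h₃ : W.Nonsingular x₃ y₃), some _ _ h₁ + some _ _ h₂ + some _ _ h₃ = 0 := by
  subst hx
  refine ⟨_, (nonsingular_neg ..).mpr (nonsingular_add h₁ h₂ hxy), ?_⟩
  rw [add_some hxy]
  exact add_of_Y_eq rfl (W.negY_negY _ _).symm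

variable [W.IsShortNF] {x x₁ x₂ x₃ y y₁ y₂ : K}

lemma negY_of_isShortNF : W.negY x y = -y := by
  simp [negY]

lemma equation_iff_of_isShortNF : W.Equation x y ↔ y ^ 2 = x ^ 3 + W.a₄ * x + W.a₆ := by
  simp [equation_iff]

lemma nonsingular_iff_of_isShortNF :
    W.Nonsingular x y ↔ W.Equation x y ∧ (3 * x ^ 2 + W.a₄ ≠ 0 ∨ 2 * y ≠ 0) := by
  simp only [nonsingular_iff', a₁_of_isCharNeTwoNF, a₂_of_isShortNF, a₃_of_isCharNeTwoNF,
    mul_zero, zero_mul, zero_sub, add_zero, neg_ne_zero]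

lemma semaev3_mul_sub_sq_eq (h₁ : W.Equation x₁ y₁) (h₂ : W.Equation x₂ y₂) :
    semaev3 W.a₄ W.a₆ x₁ x₂ x₃ * (x₁ - x₂) ^ 2 =
      ((x₁ - x₂) ^ 2 * (x₃ + x₁ + x₂) - (y₁ - y₂) ^ 2) *
        ((x₁ - x₂) ^ 2 * (x₃ + x₁ + x₂) - (y₁ + y₂) ^ 2) := by
  rw [equation_iff_of_isShortNF] at h₁ h₂
  unfold semaev3
  -- the right side depends on `y₁, y₂` only through `y₁², y₂²`
  linear_combination
    (2 * (x₁ - x₂) ^ 2 * (x₃ + x₁ + x₂) - (y₁ ^ 2 - y₂ ^ 2 + (x₁ ^ 3 + W.a₄ * x₁) -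
      (x₂ ^ 3 + W.a₄ * x₂))) * h₁ +
    (2 * (x₁ - x₂) ^ 2 * (x₃ + x₁ + x₂) + (y₁ ^ 2 - y₂ ^ 2 + (x₁ ^ 3 + W.a₄ * x₁) -
      (x₂ ^ 3 + W.a₄ * x₂))) * h₂

lemma semaev3_self (h : W.Equation x y) :
    semaev3 W.a₄ W.a₆ x x x₃ = (3 * x ^ 2 + W.a₄) ^ 2 - (2 * y) ^ 2 * (x₃ + 2 * x) := by
  rw [equation_iff_of_isShortNF] at h
  unfold semaev3
  linear_combination (4 * x₃ + 8 * x) * h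

variable [DecidableEq K]

lemma addX_slope_of_X_ne (hx : x₁ ≠ x₂) :
    W.addX x₁ x₂ (W.slope x₁ x₂ y₁ y₂) = ((y₁ - y₂) / (x₁ - x₂)) ^ 2 - x₁ - x₂ := by
  simp [slope_of_X_ne hx]

lemma addX_slope_self (hy : 2 * y ≠ 0) :
    W.addX x x (W.slope x x y y) = ((3 * x ^ 2 + W.a₄) / (2 * y)) ^ 2 - 2 * x := by
  have hy' : y ≠ W.negY x y := by
    rw [negY_of_isShortNF]
    contrapose! hy
    linear_combination hy
  rw [slope_of_Y_ne rfl hy', negY_of_isShortNF]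
  simp only [addX, a₁_of_isCharNeTwoNF, a₂_of_isShortNF]
  ring

lemma exists_addX_eq_of_semaev3_eq_zero_of_X_ne (h₁ : W.Equation x₁ y₁)
    (h₂ : W.Nonsingular x₂ y₂) (hx : x₁ ≠ x₂) (hf : semaev3 W.a₄ W.a₆ x₁ x₂ x₃ = 0) :
    ∃ y, W.Nonsingular x₂ y ∧ W.addX x₁ x₂ (W.slope x₁ x₂ y₁ y) = x₃ := by
  have hd : x₁ - x₂ ≠ 0 := sub_ne_zero.mpr hx
  have key := semaev3_mul_sub_sq_eq (x₃ := x₃) h₁ h₂.1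
  rw [hf, zero_mul, eq_comm, mul_eq_zero] at key
  rcases key with h | h
  · refine ⟨y₂, h₂, ?_⟩
    rw [addX_slope_of_X_ne hx]
    field_simp
    linear_combination -h
  · refine ⟨-y₂, negY_of_isShortNF (W := W) ▸ (nonsingular_neg ..).mpr h₂, ?_⟩
    rw [addX_slope_of_X_ne hx]
    field_simp
    linear_combination -h

lemma addX_slope_self_eq_of_semaev3_eq_zero (h : W.Nonsingular x y)
    (hf : semaev3 W.a₄ W.a₆ x x x₃ = 0) :
    y ≠ W.negY x y ∧ W.addX x x (W.slope x x y y) = x₃ := by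
  obtain ⟨he, hns⟩ := nonsingular_iff_of_isShortNF.mp h
  have hself := semaev3_self (x₃ := x₃) he
  rw [hf] at hself
  have hy : 2 * y ≠ 0 := by
    intro hy
    rw [hy] at hself
    exact hns.elim (fun h => h (by simpa using hself.symm)) (· hy)
  refine ⟨fun h => hy (by rw [negY_of_isShortNF] at h; linear_combination h), ?_⟩
  have h2 : (2 : K) ≠ 0 := left_ne_zero_of_mul hy
  have hy0 : y ≠ 0 := right_ne_zero_of_mul hy
  rw [addX_slope_self hy]
  field_simp
  linear_combination -hself

theorem exists_add_add_eq_zero_of_semaev3_eq_zero (h₁ : W.Nonsingular x₁ y₁)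
    (h₂ : W.Nonsingular x₂ y₂) (hf : semaev3 W.a₄ W.a₆ x₁ x₂ x₃ = 0) :
    ∃ (y₂' y₃ : K) (h₂' : W.Nonsingular x₂ y₂') (h₃ : W.Nonsingular x₃ y₃),
      some _ _ h₁ + some _ _ h₂' + some _ _ h₃ = 0 := by
  by_cases hx : x₁ = x₂
  · subst hx
    obtain ⟨hy, hx₃⟩ := addX_slope_self_eq_of_semaev3_eq_zero h₁ hf
    obtain ⟨y₃, h₃, hsum⟩ := exists_add_add_eq_zero_of_addX_eq h₁ h₁ (fun h => hy h.2) hx₃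
    exact ⟨y₁, y₃, h₁, h₃, hsum⟩
  · obtain ⟨y₂', h₂', hx₃⟩ := exists_addX_eq_of_semaev3_eq_zero_of_X_ne h₁.1 h₂ hx hf
    obtain ⟨y₃, h₃, hsum⟩ := exists_add_add_eq_zero_of_addX_eq h₁ h₂' (fun h => hx h.1) hx₃
    exact ⟨y₂', y₃, h₂', h₃, hsum⟩

end WeierstrassCurve.Affine

open Classical in
/-- If `Z₁, Z₂, Z₃` in the algebraic closure satisfy `f₃(Z₁,Z₂,Z₃) = 0` and each `Z_i` is
the x-coordinate of some point of `E(K̄)`, then there exist `Y₁, Y₂, Y₃` with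
`(Z_i, Y_i) ∈ E(K̄)` and `(Z₁,Y₁) + (Z₂,Y₂) + (Z₃,Y₃) = O`. -/
theorem sum_eq_zero_of_semaev3_vanishes {F : Type*} [Field F]
    (h2 : ringChar F ≠ 2) (h3 : ringChar F ≠ 3) (A B : F)
    (W : WeierstrassCurve.Affine (AlgebraicClosure F))
    (hW : W = { a₁ := 0, a₂ := 0, a₃ := 0,
                a₄ := algebraMap F (AlgebraicClosure F) A,
                a₆ := algebraMap F (AlgebraicClosure F) B })
    (hΔ : W.Δ ≠ 0)
    (Z₁ Z₂ Z₃ : AlgebraicClosure F)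
    (hf : semaev3 (algebraMap F (AlgebraicClosure F) A) (algebraMap F (AlgebraicClosure F) B)
      Z₁ Z₂ Z₃ = 0)
    (hx1 : ∃ y, W.Nonsingular Z₁ y) (hx2 : ∃ y, W.Nonsingular Z₂ y)
    (hx3 : ∃ y, W.Nonsingular Z₃ y) :
    ∃ (Y₁ Y₂ Y₃ : AlgebraicClosure F) (h1 : W.Nonsingular Z₁ Y₁) (hp2 : W.Nonsingular Z₂ Y₂)
      (hp3 : W.Nonsingular Z₃ Y₃),
      WeierstrassCurve.Affine.Point.some _ _ h1 + WeierstrassCurve.Affine.Point.some _ _ hp2 +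
        WeierstrassCurve.Affine.Point.some _ _ hp3 = 0 := by
  have : W.IsShortNF := by
    rw [hW]
    exact ⟨rfl, rfl, rfl⟩
  subst hW
  obtain ⟨y₁, h₁⟩ := hx1
  obtain ⟨y₂, h₂⟩ := hx2
  obtain ⟨Y₂, Y₃, hY₂, hY₃, hsum⟩ :=
    WeierstrassCurve.Affine.exists_add_add_eq_zero_of_semaev3_eq_zero h₁ h₂ hf
  exact ⟨y₁, Y₂, Y₃, h₁, hY₂, hY₃, hsum⟩
end

section
/- Let q ≡ 1 (mod 3), μ ∈ F_q a non-cube so that F_{q^3} = F_q[ζ]/(ζ³ - μ), char F_q ∉ {2,3}, and E : y² = x³ + Ax + B over F_q. Writing x = x_0 + x_1ζ + x_2ζ², the Weil restriction of f_3(x, x^q, x^{q²}) (reduced modulo x_i^q - x_i) is the single polynomial f̃_3(x_0,x_1,x_2) = -3x_0⁴ - 12μ²x_0x_2³ - 12μx_0x_1³ + 18μx_0²x_1x_2 + 9μ²x_1²x_2² - 6Ax_0² + 6Aμx_1x_2 - 12Bx_0 + A². That is, for all X_0, X_1, X_2 ∈ F_q, setting X = X_0 + X_1ζ + X_2ζ²,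 one has f_3(X, X^q, X^{q²}) = f̃_3(X_0, X_1, X_2). -/
/-- The Weil restriction `f̃₃` of `f₃(x, x^q, x^{q²})` with respect to the Kummer basis
`{1, ζ, ζ²}` of `F_{q³} = F_q[ζ]/(ζ³ - μ)`. -/
def ftilde3 {R : Type*} [CommRing R] (μ A B x₀ x₁ x₂ : R) : R :=
  -3 * x₀ ^ 4 - 12 * μ ^ 2 * x₀ * x₂ ^ 3 - 12 * μ * x₀ * x₁ ^ 3 +
    18 * μ * x₀ ^ 2 * x₁ * x₂ + 9 * μ ^ 2 * x₁ ^ 2 * x₂ ^ 2 - 6 * A * x₀ ^ 2 +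
    6 * A * μ * x₁ * x₂ - 12 * B * x₀ + A ^ 2

theorem IsCyclic.exists_pow_eq_of_pow_card_div_eq_one {G : Type*} [CommGroup G] [IsCyclic G]
    [Finite G] {n : ℕ} (hn : n ∣ Nat.card G) {a : G} (ha : a ^ (Nat.card G / n) = 1) :
    ∃ b, b ^ n = a := by
  have hle : (powMonoidHom n : G →* G).range ≤ (powMonoidHom (Nat.card G / n)).ker := by
    rintro _ ⟨b, rfl⟩
    simp [← pow_mul, Nat.mul_div_cancel' hn]
  have hcard : Nat.card (powMonoidHom (Nat.card G / n) : G →* G).ker ≤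
      Nat.card (powMonoidHom n : G →* G).range := by
    rw [IsCyclic.card_powMonoidHom_ker, IsCyclic.card_powMonoidHom_range, Nat.gcd_eq_right hn,
      Nat.gcd_eq_right (Nat.div_dvd_of_dvd hn)]
  have ha' : a ∈ (powMonoidHom (Nat.card G / n) : G →* G).ker := ha
  rw [← Subgroup.eq_of_le_of_card_ge hle hcard] at ha'
  exact ha'

theorem FiniteField.exists_pow_eq_of_pow_card_sub_one_div_eq_one {F : Type*} [Field F]
    [Fintype F] {n : ℕ} (hn : n ∣ Fintype.card F - 1) {a : F} (ha : a ≠ 0)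
    (h : a ^ ((Fintype.card F - 1) / n) = 1) : ∃ b, b ^ n = a := by
  have hunits : Nat.card Fˣ = Fintype.card F - 1 := by
    rw [Nat.card_units, Nat.card_eq_fintype_card]
  obtain ⟨b, hb⟩ := IsCyclic.exists_pow_eq_of_pow_card_div_eq_one (hunits ▸ hn)
    (a := Units.mk0 a ha) (by ext; simpa [hunits] using h)
  exact ⟨b, by simpa using congrArg Units.val hb⟩

theorem FiniteField.sq_add_self_add_one_eq_zero_of_not_cube {F : Type*} [Field F] [Fintype F]
    (hq : Fintype.card F % 3 = 1) {μ : F} (hμ : ¬∃ c : F, c ^ 3 = μ) :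
    (μ ^ (Fintype.card F / 3)) ^ 2 + μ ^ (Fintype.card F / 3) + 1 = 0 := by
  have hμ0 : μ ≠ 0 := by rintro rfl; exact hμ ⟨0, by ring⟩
  have hk : (Fintype.card F - 1) / 3 = Fintype.card F / 3 := by omega
  have hcube : (μ ^ (Fintype.card F / 3)) ^ 3 = 1 := by
    rw [← pow_mul, show Fintype.card F / 3 * 3 = Fintype.card F - 1 by omega]
    exact FiniteField.pow_card_sub_one_eq_one μ hμ0
  have hne : μ ^ (Fintype.card F / 3) ≠ 1 := fun h ↦
    hμ (exists_pow_eq_of_pow_card_sub_one_div_eq_one (by omega) hμ0 (hk ▸ h))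
  have hfactor : (μ ^ (Fintype.card F / 3) - 1) *
      ((μ ^ (Fintype.card F / 3)) ^ 2 + μ ^ (Fintype.card F / 3) + 1) = 0 := by
    linear_combination hcube
  exact (mul_eq_zero.mp hfactor).resolve_left (sub_ne_zero.mpr hne)

theorem FiniteField.pow_card_kummer {F R : Type*} [Field F] [Fintype F] [CommRing R]
    [Algebra F R] (hq : Fintype.card F % 3 = 1) {μ : F} {ζ : R} (hζ : ζ ^ 3 = algebraMap F R μ)
    (a b c : F) :
    (algebraMap F R a + algebraMap F R b * ζ + algebraMap F R c * ζ ^ 2) ^ Fintype.card F =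
      algebraMap F R a + algebraMap F R (μ ^ (Fintype.card F / 3) * b) * ζ +
        algebraMap F R ((μ ^ (Fintype.card F / 3)) ^ 2 * c) * ζ ^ 2 := by
  have hζq : ζ ^ Fintype.card F = algebraMap F R (μ ^ (Fintype.card F / 3)) * ζ := by
    conv_lhs => rw [← Nat.div_add_mod (Fintype.card F) 3, hq]
    rw [pow_succ, pow_mul, hζ, ← map_pow]
  have hfrob : ∀ x y : R, (x + y) ^ Fintype.card F = x ^ Fintype.card F + y ^ Fintype.card F :=
    (FiniteField.frobeniusAlgHom F R).map_add
  rw [hfrob, hfrob, mul_pow, mul_pow, ← map_pow, ← map_pow, ← map_pow, FiniteField.pow_card,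
    FiniteField.pow_card, FiniteField.pow_card, pow_right_comm, hζq]
  simp only [map_mul, map_pow]
  ring

theorem semaev3_eq_symmetric {R : Type*} [CommRing R] (A B z₁ z₂ z₃ : R) :
    semaev3 A B z₁ z₂ z₃ =
      (z₁ * z₂ + z₁ * z₃ + z₂ * z₃ - A) ^ 2 - 4 * (z₁ + z₂ + z₃) * (z₁ * z₂ * z₃ + B) := by
  unfold semaev3; ring

theorem semaev3_cube_root_conjugates {R : Type*} [CommRing R] {ω : R} (hω : ω ^ 2 + ω + 1 = 0)
    (A B x y z : R) :
    semaev3 A B (x + y + z) (x + ω * y + ω ^ 2 * z) (x + ω ^ 2 * y + ω * z) =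
      (3 * x ^ 2 - 3 * y * z - A) ^ 2 -
        4 * (3 * x) * (x ^ 3 + y ^ 3 + z ^ 3 - 3 * x * y * z + B) := by
  have he₁ : x + y + z + (x + ω * y + ω ^ 2 * z) + (x + ω ^ 2 * y + ω * z) = 3 * x := by
    linear_combination (y + z) * hω
  have he₂ : (x + y + z) * (x + ω * y + ω ^ 2 * z) + (x + y + z) * (x + ω ^ 2 * y + ω * z) +
      (x + ω * y + ω ^ 2 * z) * (x + ω ^ 2 * y + ω * z) = 3 * x ^ 2 - 3 * y * z := by
    linear_combination (ω * (y ^ 2 + z ^ 2) + (3 - ω + ω ^ 2) * y * z + 2 * x * (y + z)) * hω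
  have he₃ : (x + y + z) * (x + ω * y + ω ^ 2 * z) * (x + ω ^ 2 * y + ω * z) =
      x ^ 3 + y ^ 3 + z ^ 3 - 3 * x * y * z := by
    linear_combination ((ω - 1) * (y ^ 3 + z ^ 3) + ω ^ 2 * y * z * (y + z) +
      ω * x * (y ^ 2 + z ^ 2) + (3 - ω + ω ^ 2) * x * y * z + x ^ 2 * (y + z)) * hω
  rw [semaev3_eq_symmetric, he₁, he₂, he₃]

theorem semaev3_kummer_conjugates {R : Type*} [CommRing R] {μ ω ζ : R} (hζ : ζ ^ 3 = μ)
    (hω : ω ^ 2 + ω + 1 = 0) (A B a b c : R) :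
    semaev3 A B (a + b * ζ + c * ζ ^ 2) (a + ω * b * ζ + ω ^ 2 * c * ζ ^ 2)
      (a + ω ^ 2 * b * ζ + ω * c * ζ ^ 2) = ftilde3 μ A B a b c := by
  subst hζ
  convert semaev3_cube_root_conjugates hω A B a (b * ζ) (c * ζ ^ 2) using 2
  · ring
  · ring
  · unfold ftilde3; ring

theorem map_ftilde3 {R S : Type*} [CommRing R] [CommRing S] (f : R →+* S) (μ A B x₀ x₁ x₂ : R) :
    f (ftilde3 μ A B x₀ x₁ x₂) = ftilde3 (f μ) (f A) (f B) (f x₀) (f x₁) (f x₂) := by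
  simp only [ftilde3, map_add, map_sub, map_mul, map_pow, map_neg, map_ofNat]

theorem weil_restriction_semaev3_general {F : Type*} [Field F] [Fintype F]
    (hq3 : Fintype.card F % 3 = 1)
    (μ A B : F) (hμ : ¬∃ c : F, c ^ 3 = μ) (X₀ X₁ X₂ : F) :
    semaev3
      (algebraMap F (AdjoinRoot (Polynomial.X ^ 3 - Polynomial.C μ)) A)
      (algebraMap F (AdjoinRoot (Polynomial.X ^ 3 - Polynomial.C μ)) B)
      (algebraMap F (AdjoinRoot (Polynomial.X ^ 3 - Polynomial.C μ)) X₀ +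
        algebraMap F (AdjoinRoot (Polynomial.X ^ 3 - Polynomial.C μ)) X₁ *
          AdjoinRoot.root (Polynomial.X ^ 3 - Polynomial.C μ) +
        algebraMap F (AdjoinRoot (Polynomial.X ^ 3 - Polynomial.C μ)) X₂ *
          AdjoinRoot.root (Polynomial.X ^ 3 - Polynomial.C μ) ^ 2)
      ((algebraMap F (AdjoinRoot (Polynomial.X ^ 3 - Polynomial.C μ)) X₀ +
        algebraMap F (AdjoinRoot (Polynomial.X ^ 3 - Polynomial.C μ)) X₁ *
          AdjoinRoot.root (Polynomial.X ^ 3 - Polynomial.C μ) +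
        algebraMap F (AdjoinRoot (Polynomial.X ^ 3 - Polynomial.C μ)) X₂ *
          AdjoinRoot.root (Polynomial.X ^ 3 - Polynomial.C μ) ^ 2) ^ Fintype.card F)
      ((algebraMap F (AdjoinRoot (Polynomial.X ^ 3 - Polynomial.C μ)) X₀ +
        algebraMap F (AdjoinRoot (Polynomial.X ^ 3 - Polynomial.C μ)) X₁ *
          AdjoinRoot.root (Polynomial.X ^ 3 - Polynomial.C μ) +
        algebraMap F (AdjoinRoot (Polynomial.X ^ 3 - Polynomial.C μ)) X₂ *
          AdjoinRoot.root (Polynomial.X ^ 3 - Polynomial.C μ) ^ 2) ^ Fintype.card F ^ 2) =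
    algebraMap F (AdjoinRoot (Polynomial.X ^ 3 - Polynomial.C μ))
      (ftilde3 μ A B X₀ X₁ X₂) := by
  have hζ : AdjoinRoot.root (Polynomial.X ^ 3 - Polynomial.C μ) ^ 3 =
      algebraMap F (AdjoinRoot (Polynomial.X ^ 3 - Polynomial.C μ)) μ :=
    root_X_pow_sub_C_pow 3 μ
  rw [sq (Fintype.card F), pow_mul, FiniteField.pow_card_kummer hq3 hζ,
    FiniteField.pow_card_kummer hq3 hζ, map_ftilde3]
  have hω := FiniteField.sq_add_self_add_one_eq_zero_of_not_cube hq3 hμ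
  set ω := μ ^ (Fintype.card F / 3)
  have hω₂ : ω * (ω * X₁) = ω ^ 2 * X₁ := by ring
  have hω₄ : ω ^ 2 * (ω ^ 2 * X₂) = ω * X₂ := by linear_combination ω * (ω - 1) * X₂ * hω
  rw [hω₂, hω₄]
  simp only [map_mul, map_pow]
  refine semaev3_kummer_conjugates hζ ?_ _ _ _ _ _
  rw [← map_pow, ← map_add, ← map_one (algebraMap F _), ← map_add, hω, map_zero]

/-- Let `q ≡ 1 (mod 3)`, `μ ∈ F_q` a non-cube, `F_{q³} = F_q[ζ]/(ζ³ - μ)`, and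
`char F_q ∉ {2,3}`. Writing `X = X₀ + X₁ζ + X₂ζ²` with `X₀, X₁, X₂ ∈ F_q`, the Weil
restriction identity `f₃(X, X^q, X^{q²}) = f̃₃(X₀, X₁, X₂)` holds. -/
theorem weil_restriction_semaev3 {F : Type*} [Field F] [Fintype F]
    (hq3 : Fintype.card F % 3 = 1) (h2 : ringChar F ≠ 2) (h3 : ringChar F ≠ 3)
    (μ A B : F) (hμ : ¬∃ c : F, c ^ 3 = μ) (X₀ X₁ X₂ : F) :
    semaev3
      (algebraMap F (AdjoinRoot (Polynomial.X ^ 3 - Polynomial.C μ)) A)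
      (algebraMap F (AdjoinRoot (Polynomial.X ^ 3 - Polynomial.C μ)) B)
      (algebraMap F (AdjoinRoot (Polynomial.X ^ 3 - Polynomial.C μ)) X₀ +
        algebraMap F (AdjoinRoot (Polynomial.X ^ 3 - Polynomial.C μ)) X₁ *
          AdjoinRoot.root (Polynomial.X ^ 3 - Polynomial.C μ) +
        algebraMap F (AdjoinRoot (Polynomial.X ^ 3 - Polynomial.C μ)) X₂ *
          AdjoinRoot.root (Polynomial.X ^ 3 - Polynomial.C μ) ^ 2)
      ((algebraMap F (AdjoinRoot (Polynomial.X ^ 3 - Polynomial.C μ)) X₀ +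
        algebraMap F (AdjoinRoot (Polynomial.X ^ 3 - Polynomial.C μ)) X₁ *
          AdjoinRoot.root (Polynomial.X ^ 3 - Polynomial.C μ) +
        algebraMap F (AdjoinRoot (Polynomial.X ^ 3 - Polynomial.C μ)) X₂ *
          AdjoinRoot.root (Polynomial.X ^ 3 - Polynomial.C μ) ^ 2) ^ Fintype.card F)
      ((algebraMap F (AdjoinRoot (Polynomial.X ^ 3 - Polynomial.C μ)) X₀ +
        algebraMap F (AdjoinRoot (Polynomial.X ^ 3 - Polynomial.C μ)) X₁ *
          AdjoinRoot.root (Polynomial.X ^ 3 - Polynomial.C μ) +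
        algebraMap F (AdjoinRoot (Polynomial.X ^ 3 - Polynomial.C μ)) X₂ *
          AdjoinRoot.root (Polynomial.X ^ 3 - Polynomial.C μ) ^ 2) ^ Fintype.card F ^ 2) =
    algebraMap F (AdjoinRoot (Polynomial.X ^ 3 - Polynomial.C μ))
      (ftilde3 μ A B X₀ X₁ X₂) :=
  weil_restriction_semaev3_general hq3 μ A B hμ X₀ X₁ X₂
end
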